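/- Let ω' ∈ {0,1}^ℕ be any aperiodic infinite binary word, and let ω be the image of ω' under the morphism f defined by f(0) = 012 and f(1) = 021 (so ω is an infinite word over {0,1,2}). Then ρ^ab_ω(n) = 3 for all n ≥ 1. -/

import Mathlib

/-!
Every block `f(b)` contains each letter exactly once, so a prefix of `ω` of length `3q + r`
contains `q` copies of each letter plus the first `r` letters of `f(ω'_q)`. Comparing two
prefixes, a factor of length `n` contains the letter `0` between `(n - 2)/3` and `(n + 2)/3`
times and each of `1`, `2` between `(n - 3)/3` and `(n + 3)/3` times; together with the total
`n` this leaves exactly three Parikh vectors. Each of them is realised by a factor starting at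
the beginning or at the last letter of a block, provided `ω'` contains a given letter, or a
given pair of distinct letters at distance `n/3`. Both hold because `ω'` is aperiodic: if
every `a` in `ω'` is followed `q` places later by `a` again, then the set of residues
`r < q` with `ω'(mq + r) = a` grows with `m`, hence stabilises, and `ω'` becomes periodic.
-/

/-- The factor of the infinite word `ω` of length `n` starting at position `i`. -/
def factor {A : Type*} (ω : ℕ → A) (i n : ℕ) : List A :=
  (List.range n).map fun j => ω (i + j)

/-- The abelian complexity of `ω`: the number of abelian equivalence classes of
factors of `ω` of length `n`. -/
noncomputable def abelianComplexity {A : Type*} [DecidableEq A] (ω : ℕ → A) (n : ℕ) : ℕ :=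
  Set.ncard {c : A → ℕ | ∃ i : ℕ, c = fun a => (factor ω i n).count a}

/-- `ω` is ultimately periodic. -/
def UltimatelyPeriodic {A : Type*} (ω : ℕ → A) : Prop :=
  ∃ m p : ℕ, 0 < p ∧ ∀ n : ℕ, m ≤ n → ω (n + p) = ω n

section Parikh

variable {A : Type*}

lemma factor_add (ω : ℕ → A) (i m n : ℕ) :
    factor ω i (m + n) = factor ω i m ++ factor ω (i + m) n := by
  simp [factor, List.range_add, Nat.add_assoc]

variable [DecidableEq A]

def parikh (ω : ℕ → A) (i n : ℕ) (a : A) : ℕ :=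
  (factor ω i n).count a

lemma abelianComplexity_eq_ncard_range (ω : ℕ → A) (n : ℕ) :
    abelianComplexity ω n = (Set.range (parikh ω · n)).ncard := by
  simp only [abelianComplexity, Set.range, eq_comm]
  rfl

lemma parikh_add (ω : ℕ → A) (i m n : ℕ) :
    parikh ω i (m + n) = parikh ω i m + parikh ω (i + m) n := by
  ext a
  simp [parikh, factor_add]

lemma parikh_prefix_add (ω : ℕ → A) (i n : ℕ) (a : A) :
    parikh ω 0 (i + n) a = parikh ω 0 i a + parikh ω i n a := by
  rw [parikh_add, zero_add, Pi.add_apply]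

lemma sum_parikh [Fintype A] (ω : ℕ → A) (i n : ℕ) : ∑ a, parikh ω i n a = n := by
  simpa [parikh, factor] using
    Multiset.sum_count_eq_card (s := Finset.univ) (m := (factor ω i n : Multiset A)) (by simp)

end Parikh

lemma ultimatelyPeriodic_of_forall_imp_add {p : ℕ → Prop} {q : ℕ} (hq : 0 < q)
    (h : ∀ i, p i → p (i + q)) : UltimatelyPeriodic p := by
  let residues : ℕ →o Set (Fin q) :=
    ⟨fun n => {r | p (n * q + r)}, monotone_nat_of_le_succ fun n r hr => by
      simpa [add_mul, add_right_comm] using h _ hr⟩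
  obtain ⟨N, hN⟩ := WellFoundedGT.monotone_chain_condition residues
  refine ⟨N * q, q, hq, fun n hn => propext ?_⟩
  have hNn : N ≤ n / q := (Nat.le_div_iff_mul_le hq).2 hn
  have hstable : residues (n / q + 1) = residues (n / q) :=
    (hN _ (hNn.trans (Nat.le_succ _))).symm.trans (hN _ hNn)
  have hr := Set.ext_iff.1 hstable ⟨n % q, Nat.mod_lt n hq⟩
  change p _ ↔ p _ at hr
  rwa [add_one_mul, add_right_comm, Nat.div_add_mod'] at hr

lemma exists_eq_and_add_eq_of_not_ultimatelyPeriodic {ω : ℕ → Fin 2}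
    (hω : ¬ UltimatelyPeriodic ω) {q : ℕ} (hq : 0 < q) {a b : Fin 2} (hab : a ≠ b) :
    ∃ i, ω i = a ∧ ω (i + q) = b := by
  by_contra! h
  obtain ⟨m, p, hp, hper⟩ :=
    ultimatelyPeriodic_of_forall_imp_add hq fun i (hi : ω i = a) => by have := h i hi; omega
  refine hω ⟨m, p, hp, fun n hn => ?_⟩
  have := (hper n hn).to_iff
  omega

lemma vec3_eq_iff {α : Type*} {c : Fin 3 → α} {x y z : α} :
    c = ![x, y, z] ↔ c 0 = x ∧ c 1 = y ∧ c 2 = z := by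
  simp [funext_iff, Fin.forall_fin_succ]

def fImageParikhVectors (n : ℕ) : Set (Fin 3 → ℕ) :=
  let k := n / 3
  match n % 3 with
  | 0 => {![k, k, k], ![k, k + 1, k - 1], ![k, k - 1, k + 1]}
  | 1 => {![k + 1, k, k], ![k, k + 1, k], ![k, k, k + 1]}
  | _ => {![k + 1, k + 1, k], ![k + 1, k, k + 1], ![k, k + 1, k + 1]}

lemma ncard_fImageParikhVectors (n : ℕ) : (fImageParikhVectors n).ncard = 3 := by
  obtain hs | hs | hs : n % 3 = 0 ∨ n % 3 = 1 ∨ n % 3 = 2 := by omega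
  all_goals
    simp only [fImageParikhVectors, hs]
    refine Set.ncard_eq_three.2 ⟨_, _, _, ?_, ?_, ?_, rfl⟩ <;>
      simp [funext_iff, Fin.forall_fin_succ]

/-- `ω = f(ω')` for the morphism `f : 0 ↦ 012, 1 ↦ 021`. -/
def IsFImage (ω' : ℕ → Fin 2) (ω : ℕ → Fin 3) : Prop :=
  ∀ i : ℕ,
    ω (3 * i) = 0 ∧
    ω (3 * i + 1) = (if ω' i = 0 then 1 else 2) ∧
    ω (3 * i + 2) = (if ω' i = 0 then 2 else 1)

namespace IsFImage

variable {ω' : ℕ → Fin 2} {ω : ℕ → Fin 3}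

lemma parikh_block (hω : IsFImage ω' ω) (q : ℕ) : parikh ω (3 * q) 3 = 1 := by
  obtain ⟨h0, h1, h2⟩ := hω q
  ext a
  fin_cases a <;> by_cases hq : ω' q = 0 <;>
    simp [parikh, factor, List.range_succ, h0, h1, h2, hq]

lemma parikh_prefix_three_mul (hω : IsFImage ω' ω) (q : ℕ) : parikh ω 0 (3 * q) = q := by
  induction q with
  | zero => ext; simp [parikh, factor]
  | succ q ih => rw [mul_add_one, parikh_add, ih, zero_add, hω.parikh_block, Nat.cast_add_one]

lemma parikh_prefix (hω : IsFImage ω' ω) (q : ℕ) {r : ℕ} (hr : r < 3) :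
    parikh ω 0 (3 * q + r) 0 = q + (r + 2) / 3 ∧
    parikh ω 0 (3 * q + r) 1 = q + (if ω' q = 0 then (r + 1) / 3 else r / 3) ∧
    parikh ω 0 (3 * q + r) 2 = q + (if ω' q = 0 then r / 3 else (r + 1) / 3) := by
  obtain ⟨h0, h1, -⟩ := hω q
  rw [parikh_add, hω.parikh_prefix_three_mul, zero_add]
  obtain hq | hq : ω' q = 0 ∨ ω' q = 1 := by omega
  all_goals interval_cases r <;> simp [parikh, factor, List.range_succ, h0, h1, hq]

lemma parikh_balanced (hω : IsFImage ω' ω) (i n : ℕ) :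
    (3 * parikh ω i n 0 ≤ n + 2 ∧ n ≤ 3 * parikh ω i n 0 + 2) ∧
    ∀ a, 3 * parikh ω i n a ≤ n + 3 ∧ n ≤ 3 * parikh ω i n a + 3 := by
  obtain ⟨q, r, hr, rfl⟩ : ∃ q r, r < 3 ∧ i = 3 * q + r :=
    ⟨i / 3, i % 3, Nat.mod_lt _ (by norm_num), (Nat.div_add_mod i 3).symm⟩
  obtain ⟨q', r', hr', hend⟩ : ∃ q' r', r' < 3 ∧ 3 * q + r + n = 3 * q' + r' :=
    ⟨_, _, Nat.mod_lt _ (by norm_num), (Nat.div_add_mod (3 * q + r + n) 3).symm⟩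
  obtain ⟨p0, p1, p2⟩ := hω.parikh_prefix q hr
  obtain ⟨q0, q1, q2⟩ := hω.parikh_prefix q' hr'
  have e0 := parikh_prefix_add ω (3 * q + r) n 0
  have e1 := parikh_prefix_add ω (3 * q + r) n 1
  have e2 := parikh_prefix_add ω (3 * q + r) n 2
  rw [hend] at e0 e1 e2
  refine ⟨by omega, fun a => ?_⟩
  fin_cases a <;> simp only [Fin.zero_eta, Fin.mk_one, Fin.reduceFinMk] <;>
    split_ifs at p1 p2 q1 q2 <;> omega

lemma parikh_mem_fImageParikhVectors (hω : IsFImage ω' ω) (i n : ℕ) :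
    parikh ω i n ∈ fImageParikhVectors n := by
  have hsum := sum_parikh ω i n
  rw [Fin.sum_univ_three] at hsum
  obtain ⟨⟨h0, h0'⟩, h⟩ := hω.parikh_balanced i n
  obtain ⟨h1, h1'⟩ := h 1
  obtain ⟨h2, h2'⟩ := h 2
  obtain hs | hs | hs : n % 3 = 0 ∨ n % 3 = 1 ∨ n % 3 = 2 := by omega
  all_goals
    simp only [fImageParikhVectors, hs, Set.mem_insert_iff, Set.mem_singleton_iff, vec3_eq_iff]
    omega

lemma mem_range_parikh (hω : IsFImage ω' ω) {n q r q' r' x y z : ℕ}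
    (hn : 3 * q + r + n = 3 * q' + r')
    (h0 : q + (r + 2) / 3 + x = q' + (r' + 2) / 3)
    (h1 : q + (if ω' q = 0 then (r + 1) / 3 else r / 3) + y =
      q' + (if ω' q' = 0 then (r' + 1) / 3 else r' / 3))
    (h2 : q + (if ω' q = 0 then r / 3 else (r + 1) / 3) + z =
      q' + (if ω' q' = 0 then r' / 3 else (r' + 1) / 3))
    (hr : r < 3 := by norm_num) (hr' : r' < 3 := by norm_num) :
    ![x, y, z] ∈ Set.range (parikh ω · n) := by
  refine ⟨3 * q + r, funext fun a => ?_⟩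
  have e := parikh_prefix_add ω (3 * q + r) n a
  rw [hn] at e
  obtain ⟨p0, p1, p2⟩ := hω.parikh_prefix q hr
  obtain ⟨q0, q1, q2⟩ := hω.parikh_prefix q' hr'
  fin_cases a <;>
    simp only [Fin.zero_eta, Fin.mk_one, Fin.reduceFinMk, Matrix.cons_val_zero,
      Matrix.cons_val_one, Matrix.cons_val_two, Matrix.head_cons, Matrix.tail_cons] at e ⊢ <;>
    omega

lemma fImageParikhVectors_subset_range (hω : IsFImage ω' ω) (hap : ¬ UltimatelyPeriodic ω')
    {n : ℕ} (hn : 1 ≤ n) : fImageParikhVectors n ⊆ Set.range (parikh ω · n) := by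
  have occurs (b : Fin 2) : ∃ j, ω' j = b := by
    obtain ⟨j, -, hj⟩ := exists_eq_and_add_eq_of_not_ultimatelyPeriodic hap one_pos
      (show b + 1 ≠ b by omega)
    exact ⟨_, hj⟩
  obtain hs | hs | hs : n % 3 = 0 ∨ n % 3 = 1 ∨ n % 3 = 2 := by omega
  all_goals
    simp only [fImageParikhVectors, hs]
    rintro c (rfl | rfl | rfl)
  · refine hω.mem_range_parikh (q := 0) (r := 0) (q' := n / 3) (r' := 0) (by omega)
      ?_ ?_ ?_ <;> grind
  · obtain ⟨j, hj, hjk⟩ := exists_eq_and_add_eq_of_not_ultimatelyPeriodic hap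
      (show 0 < n / 3 by omega) (show (1 : Fin 2) ≠ 0 by decide)
    refine hω.mem_range_parikh (q := j) (r := 2) (q' := j + n / 3) (r' := 2) (by omega)
      ?_ ?_ ?_ <;> grind
  · obtain ⟨j, hj, hjk⟩ := exists_eq_and_add_eq_of_not_ultimatelyPeriodic hap
      (show 0 < n / 3 by omega) (show (0 : Fin 2) ≠ 1 by decide)
    refine hω.mem_range_parikh (q := j) (r := 2) (q' := j + n / 3) (r' := 2) (by omega)
      ?_ ?_ ?_ <;> grind
  · refine hω.mem_range_parikh (q := 0) (r := 0) (q' := n / 3) (r' := 1) (by omega)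
      ?_ ?_ ?_ <;> grind
  · obtain ⟨j, hj⟩ := occurs 1
    refine hω.mem_range_parikh (q := j) (r := 2) (q' := j + n / 3 + 1) (r' := 0) (by omega)
      ?_ ?_ ?_ <;> grind
  · obtain ⟨j, hj⟩ := occurs 0
    refine hω.mem_range_parikh (q := j) (r := 2) (q' := j + n / 3 + 1) (r' := 0) (by omega)
      ?_ ?_ ?_ <;> grind
  · obtain ⟨j, hj⟩ := occurs 1
    refine hω.mem_range_parikh (q := j) (r := 2) (q' := j + n / 3 + 1) (r' := 1) (by omega)
      ?_ ?_ ?_ <;> grind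
  · obtain ⟨j, hj⟩ := occurs 0
    refine hω.mem_range_parikh (q := j) (r := 2) (q' := j + n / 3 + 1) (r' := 1) (by omega)
      ?_ ?_ ?_ <;> grind
  · refine hω.mem_range_parikh (q := 0) (r := 1) (q' := n / 3 + 1) (r' := 0) (by omega)
      ?_ ?_ ?_ <;> grind

end IsFImage

/-- Let `ω'` be an aperiodic binary word and let `ω` be its image under
the morphism `0 ↦ 012`, `1 ↦ 021`. Then `ρ^ab_ω(n) = 3` for all `n ≥ 1`. -/
theorem abelianComplexity_of_f_image
    (ω' : ℕ → Fin 2) (hap : ¬ UltimatelyPeriodic ω') (ω : ℕ → Fin 3)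
    (hω : ∀ i : ℕ,
      ω (3 * i) = 0 ∧
      ω (3 * i + 1) = (if ω' i = 0 then 1 else 2) ∧
      ω (3 * i + 2) = (if ω' i = 0 then 2 else 1)) :
    ∀ n : ℕ, 1 ≤ n → abelianComplexity ω n = 3 := by
  intro n hn
  have hω : IsFImage ω' ω := hω
  have hrange : Set.range (parikh ω · n) = fImageParikhVectors n :=
    (Set.range_subset_iff.2 (hω.parikh_mem_fImageParikhVectors · n)).antisymm
      (hω.fImageParikhVectors_subset_range hap hn)
  rw [abelianComplexity_eq_ncard_range, hrange, ncard_fImageParikhVectors]
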